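/- Let a, N ∈ ℕ, m ∈ ℤ with m > N, λ ∈ ℂ, and let (f_{-N},…,f_N) ∈ Ξ(λ,a,N,m). Then: (1) if 0 ≤ j ≤ N-1, λ+j-1 ∉ M_{a+m-j}^{m-j-1}, and f_{j+1} = 0, then f_j = 0; (2) if 1 ≤ j ≤ N, γ(λ, a+m-j-2) ≠ 0, and f_{-j+1} = 0, then f_{-j} = 0. -/

import Mathlib

noncomputable section

open Polynomial Finset

/-- The space `Pol_b[t]_even`: span of the monomials `t^(b-2i)`, `0 ≤ i ≤ ⌊b/2⌋`
(zero space when `b < 0`). -/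
def polEven (b : ℤ) (f : ℂ[X]) : Prop :=
  ∀ n : ℕ, f.coeff n ≠ 0 → (n : ℤ) ≤ b ∧ (2 : ℤ) ∣ (b - n)

/-- Imaginary Gegenbauer operator `S_ℓ^μ`. -/
def gegenS (μ : ℂ) (ℓ : ℤ) (f : ℂ[X]) : ℂ[X] :=
  -((1 + X ^ 2) * derivative (derivative f)
      + (1 + 2 * C μ) * X * derivative f
      - C ((ℓ : ℂ) * ((ℓ : ℂ) + 2 * μ)) * f)

/-- Euler operator `ϑ_t`. -/
def euler (f : ℂ[X]) : ℂ[X] := X * derivative f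

/-- Renormalized Gegenbauer polynomial `C̃_n^μ(z)` for a natural number degree `n`. -/
def gegenC (μ : ℂ) (n : ℕ) : ℂ[X] :=
  ∑ k ∈ range (n / 2 + 1),
    C ((-1 : ℂ) ^ k / ((k.factorial : ℂ) * ((n - 2 * k).factorial : ℂ)) *
        ∏ s ∈ range (n / 2 - k), (μ + (((n + 1) / 2 : ℕ) : ℂ) + (s : ℂ))) *
      (C 2 * X) ^ (n - 2 * k)

/-- `C̃_ℓ^μ(z)` for `ℓ : ℤ` (zero for `ℓ < 0`). -/
def gegenCZ (μ : ℂ) (ℓ : ℤ) : ℂ[X] := if 0 ≤ ℓ then gegenC μ ℓ.toNat else 0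

/-- `C̃_ℓ^μ(it)`: substitution `z = it`. -/
def gegenCit (μ : ℂ) (ℓ : ℤ) : ℂ[X] := (gegenCZ μ ℓ).comp (C Complex.I * X)

/-- `γ(μ, ℓ)`. -/
def gam (μ : ℂ) (ℓ : ℤ) : ℂ := if ℓ % 2 = 0 then μ + ((ℓ / 2 : ℤ) : ℂ) else 1

/-- `Γ(x+k)/Γ(x)` interpreted as a finite product (reciprocal for `k < 0`). -/
def gratio (x : ℂ) (k : ℤ) : ℂ :=
  if 0 ≤ k then ∏ i ∈ range k.toNat, (x + (i : ℂ))
  else (∏ i ∈ range (-k).toNat, (x + (k : ℂ) + (i : ℂ)))⁻¹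

/-- `Γ(z₁)/Γ(z₂)` at integer arguments, as a finite product. -/
def gq (z₁ z₂ : ℤ) : ℂ := gratio (z₂ : ℂ) (z₁ - z₂)

/-- The set `Λ(N,a,m)`, regarded as a subset of `ℂ`. -/
def LambdaSet (N a : ℕ) (m : ℤ) : Set ℂ :=
  { x | ∃ q : ℤ, max 0 ((N : ℤ) - a + m) ≤ q ∧ q ≤ 2 * N ∧
      x = (N : ℂ) + 1 - (a : ℂ) - (q : ℂ) }

/-- The set `M_ℓ^k`, regarded as a subset of `ℂ`. -/
def Mset (ℓ k : ℤ) : Set ℂ :=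
  { x | ∃ d : ℤ, 0 ≤ d ∧ d ≤ ℓ / 2 - k - 1 ∧ x = -(((ℓ + 1) / 2 : ℤ) : ℂ) - (d : ℂ) }

/-- The solution space `Ξ(λ,a,N,m)` of the system (A_j^±), (B_j^±), realized as
the set of tuples `(f_{-N},…,f_N)`, encoded as functions `ℤ → ℂ[X]` vanishing for `|j| > N`. -/
def XiSet (lam : ℂ) (a N : ℕ) (m : ℤ) : Set (ℤ → ℂ[X]) :=
  { f |
    (∀ j : ℤ, (N : ℤ) < |j| → f j = 0) ∧
    (∀ j : ℤ, |j| ≤ (N : ℤ) → polEven ((a : ℤ) - m + j) (f j)) ∧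
    (∀ j : ℤ, 0 ≤ j → j ≤ (N : ℤ) →
      gegenS (lam + (j : ℂ) - 1) ((a : ℤ) + m - j) (f j)
        - C (2 * ((N : ℂ) - (j : ℂ))) * derivative (f (j + 1)) = 0) ∧
    (∀ j : ℤ, 0 ≤ j → j ≤ (N : ℤ) →
      gegenS (lam + (j : ℂ) - 1) ((a : ℤ) - m - j) (f (-j))
        + C (2 * ((N : ℂ) - (j : ℂ))) * derivative (f (-j - 1)) = 0) ∧
    (∀ j : ℤ, 1 ≤ j → j ≤ (N : ℤ) →
      C (2 * (-(m : ℂ)) * (lam + (a : ℂ) - 1)) * f j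
        + C (2 * (j : ℂ)) * (C (lam - 1) * f j + euler (f j))
        + C ((N : ℂ) - (j : ℂ)) * derivative (f (j + 1))
        + C ((N : ℂ) + (j : ℂ)) * derivative (f (j - 1)) = 0) ∧
    (∀ j : ℤ, 1 ≤ j → j ≤ (N : ℤ) →
      C (2 * (m : ℂ) * (lam + (a : ℂ) - 1)) * f (-j)
        + C (2 * (j : ℂ)) * (C (lam - 1) * f (-j) + euler (f (-j)))
        - C ((N : ℂ) + (j : ℂ)) * derivative (f (-j + 1))
        - C ((N : ℂ) - (j : ℂ)) * derivative (f (-j - 1)) = 0) }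

/-- The constant `C_{j,r}^+`. -/
def Cp (lam : ℂ) (a N : ℕ) (m : ℤ) (j r : ℕ) : ℂ :=
  ((N - j).choose r : ℂ) * (((2 * N - r).factorial : ℂ) / ((N + j).factorial : ℂ)) *
    (∏ i ∈ range r, ((N : ℂ) - (m : ℂ) - (i : ℂ))) *
    (∏ i ∈ range r, (lam + (a : ℂ) - (N : ℂ) - 1 + (i : ℂ)))

/-- The constant `C_{j,r}^-`. -/
def Cm (lam : ℂ) (a N : ℕ) (m : ℤ) (j r : ℕ) : ℂ :=
  ((N - j).choose r : ℂ) * (((2 * N - r).factorial : ℂ) / ((N + j).factorial : ℂ)) *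
    (∏ i ∈ range r, ((N : ℂ) + (m : ℂ) - (i : ℂ))) *
    (∏ i ∈ range r, (lam + (a : ℂ) - (N : ℂ) - 1 + (i : ℂ)))

/-- The gamma factor `Γ_j^+`. -/
def GammaP (lam : ℂ) (a N : ℕ) (m : ℤ) (j : ℕ) : ℂ :=
  ∏ d ∈ range (N - j), gam (lam + (N : ℂ) - 1) ((a : ℤ) + m - (N : ℤ) - ((d : ℤ) + 1))

/-- The gamma factor `Γ_j^-`. -/
def GammaM (lam : ℂ) (a N : ℕ) (m : ℤ) (j : ℕ) : ℂ :=
  ∏ d ∈ range (N - j), gam (lam + (N : ℂ) - 1) ((a : ℤ) - m - (N : ℤ) - ((d : ℤ) + 1))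

/-- The constant `D_{j,r}` (with parameter `q`). -/
def Dc (N : ℕ) (m q : ℤ) (j r : ℕ) : ℂ :=
  ((N - j).choose r : ℂ) * (((2 * N - r).factorial : ℂ) / ((N + j).factorial : ℂ)) *
    (∏ i ∈ range r, ((N : ℂ) + (m : ℂ) - (i : ℂ))) *
    (∏ i ∈ range r, ((q : ℂ) - 2 * (N : ℂ) + (i : ℂ)))

/-- Binomial coefficient with integer upper argument: `binom(x,k) = (∏_{i<k}(x-i))/k!`. -/
def zbinom (x : ℤ) (k : ℕ) : ℂ := (∏ i ∈ range k, ((x : ℂ) - (i : ℂ))) / (k.factorial : ℂ)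

/-- The gamma factor `Γ(d,r)` of the paper (for integral `λ = λz`, `ν = νz`). -/
def GammaAB (N : ℕ) (m lamz nuz : ℤ) (d r : ℕ) : ℂ :=
  (d.choose r : ℂ) *
    gq (lamz + (nuz - lamz - m + (N : ℤ) - (d : ℤ) - 1) / 2)
       (lamz + (nuz - lamz - m - 1) / 2) *
    (((2 * N - r).factorial : ℂ) / (N.factorial : ℂ)) *
    (∏ i ∈ range r, ((N : ℂ) + (m : ℂ) - (i : ℂ)))

/-- The constant `A(d,r)` of the paper (for integral `λ = λz`, `ν = νz`). -/
def Acoef (N : ℕ) (m lamz nuz : ℤ) (d r : ℕ) : ℂ :=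
  (-1 : ℂ) ^ (nuz - 1) * GammaAB N m lamz nuz d r *
    gq (lamz + (-nuz - lamz - m + (N : ℤ) - (d : ℤ) + 1) / 2)
       (lamz + (nuz - lamz - m + (N : ℤ) - (d : ℤ) - 1) / 2) *
    ∏ i ∈ range r, ((N : ℂ) + (nuz : ℂ) - ((i : ℂ) + 1))

/-- The constant `B(d,r)` of the paper (for integral `λ = λz`, `ν = νz`). -/
def Bcoef (N : ℕ) (m lamz nuz : ℤ) (d r : ℕ) : ℂ :=
  (-1 : ℂ) ^ ((d : ℤ) - (N : ℤ)) * GammaAB N m lamz nuz (2 * N - d) r *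
    ∏ i ∈ range r, ((N : ℂ) - (nuz : ℂ) + 2 - ((i : ℂ) + 1))

/-- The predicate `(E_j^+)` on `f_j`. -/
def Eplus (lam : ℂ) (a N : ℕ) (m : ℤ) (qp : ℂ) (j : ℕ) (fj : ℂ[X]) : Prop :=
  C ((-Complex.I) ^ (N - j) * (((2 * N).factorial : ℂ) / ((N + j).factorial : ℂ)) *
      GammaP lam a N m j) * fj
    = C qp * ∑ r ∈ range (N - j + 1),
        C (Cp lam a N m j r) *
          gegenCit (lam + (N : ℂ) - 1 - (r : ℂ)) ((a : ℤ) + m - 2 * (N : ℤ) + (j : ℤ) + 2 * (r : ℤ))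

/-- The predicate `(E_j^-)` on `f_{-j}`. -/
def Eminus (lam : ℂ) (a N : ℕ) (m : ℤ) (qm : ℂ) (j : ℕ) (fj : ℂ[X]) : Prop :=
  C (Complex.I ^ (N - j) * (((2 * N).factorial : ℂ) / ((N + j).factorial : ℂ)) *
      GammaM lam a N m j) * fj
    = C qm * ∑ r ∈ range (N - j + 1),
        C (Cm lam a N m j r) *
          gegenCit (lam + (N : ℂ) - 1 - (r : ℂ)) ((a : ℤ) - m - 2 * (N : ℤ) + (j : ℤ) + 2 * (r : ℤ))

/-- The constant `C_{0,r}(m')` with integer parameter `a`. -/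
def C0r (lam : ℂ) (N : ℕ) (a m' : ℤ) (r : ℕ) : ℂ :=
  (N.choose r : ℂ) * (((2 * N - r).factorial : ℂ) / (N.factorial : ℂ)) *
    (∏ i ∈ range r, ((N : ℂ) - (m' : ℂ) - (i : ℂ))) *
    (∏ i ∈ range r, (lam + (a : ℂ) - (N : ℂ) - 1 + (i : ℂ)))

/-- `α(λ,N,a,m')`. -/
def alphaF (lam : ℂ) (N : ℕ) (a m' : ℤ) : ℂ :=
  ∑ r ∈ range (N + 1), (-1 : ℂ) ^ r * C0r lam N a m' r *
    ∏ i ∈ range (N - r), ((((a + m') / 2 : ℤ) : ℂ) - ((i : ℂ) + 1))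

/-- `β(λ,N,a,m')`. -/
def betaF (lam : ℂ) (N : ℕ) (a m' : ℤ) : ℂ :=
  ∑ r ∈ range (N + 1), (-1 : ℂ) ^ r * C0r lam N a m' r *
    ∏ i ∈ range (N - r), ((((a + m' + 2) / 2 : ℤ) : ℂ) - ((i : ℂ) + 1))

/-- The polynomial function `P(λ)`. -/
def Pf (N : ℕ) (a m : ℤ) (lam : ℂ) : ℂ :=
  (lam + (((a + m - 1) / 2 : ℤ) : ℂ)) * (((a + m) / 2 : ℤ) : ℂ) *
      alphaF lam N a m * betaF lam N a (-m)
    - (lam + (((a - m - 1) / 2 : ℤ) : ℂ)) * (((a - m) / 2 : ℤ) : ℂ) *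
      alphaF lam N a (-m) * betaF lam N a m

/-- The polynomial function `Q(λ)`. -/
def Qf (N : ℕ) (a m : ℤ) (lam : ℂ) : ℂ :=
  (∏ i ∈ range (N + 1), ((m : ℂ) + (i : ℂ))) *
    (∏ i ∈ range N, (((i : ℂ) + 1) - (m : ℂ))) *
    ∏ q ∈ range (2 * N + 1), (lam - (N : ℂ) - 1 + (a : ℂ) + (q : ℂ))

/-- `α̃(a,m')`. -/
def alphaTilde (N q : ℕ) (a m' : ℤ) : ℂ :=
  ∑ r ∈ range (min q N + 1),
    (N.choose r : ℂ) * (((2 * N - r).factorial : ℂ) / ((2 * N - q).factorial : ℂ)) *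
      ((q.factorial : ℂ) / ((q - r).factorial : ℂ)) *
      (∏ i ∈ range r, ((N : ℂ) - (m' : ℂ) - (i : ℂ))) *
      (∏ i ∈ Finset.Ico r q, ((((a + m') / 2 : ℤ) : ℂ) - (N : ℂ) + (i : ℂ)))

/-- The explicit generating tuple of `Ξ(λ,a,N,m)` of Theorem 4.3 (statement 1). -/
def F1 (N a : ℕ) (m q : ℤ) : ℤ → ℂ[X] := fun j =>
  let lamz : ℤ := (N : ℤ) + 1 - a - q
  let nuz : ℤ := (N : ℤ) + 1 - q
  let lam : ℂ := (lamz : ℂ)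
  if 1 ≤ j ∧ j ≤ (N : ℤ) then
    C (Complex.I ^ (-j) * (-1 : ℂ) ^ (nuz - 1)) *
      ∑ r ∈ range (N - j.toNat + 1),
        C ((-1 : ℂ) ^ r * Acoef N m lamz nuz (N - j.toNat) r) *
          gegenCit (lam + (N : ℂ) - 1 - (r : ℂ))
            ((a : ℤ) - m + j + 2 * (1 - (N : ℤ) - nuz + (r : ℤ)))
  else if -(N : ℤ) ≤ j ∧ j ≤ 0 then
    C (Complex.I ^ j) *
      ∑ r ∈ range (N - (-j).toNat + 1),
        C ((-1 : ℂ) ^ r * Bcoef N m lamz nuz (N + (-j).toNat) r) *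
          gegenCit (lam + (N : ℂ) - 1 - (r : ℂ))
            ((a : ℤ) - m + (-j) - 2 * (N : ℤ) + 2 * (r : ℤ))
  else 0

/-- The explicit tuple of statement 16. -/
def F16 (N a : ℕ) (m q : ℤ) : ℤ → ℂ[X] := fun j =>
  let lam : ℂ := (N : ℂ) + 1 - (a : ℂ) - (q : ℂ)
  if 1 ≤ j ∧ j ≤ (N : ℤ) then
    C ((-Complex.I) ^ j.toNat * (((N + j.toNat).factorial : ℂ) / (N.factorial : ℂ)) *
        gratio (lam + ((((a : ℤ) - m - 1) / 2 : ℤ) : ℂ))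
          (((a : ℤ) - m + j - 1) / 2 + q - (N : ℤ) - ((a : ℤ) - m - 1) / 2)) *
      ∑ r ∈ range (N - j.toNat + 1),
        C (Dc N m q j.toNat r) *
          gegenCit (lam + (N : ℂ) - 1 - (r : ℂ))
            ((a : ℤ) - m + j + 2 * (q - 2 * (N : ℤ) + (r : ℤ)))
  else if -(N : ℤ) ≤ j ∧ j ≤ 0 then
    C (Complex.I ^ (-j).toNat * (((N + (-j).toNat).factorial : ℂ) / (N.factorial : ℂ)) *
        gratio (lam + ((((a : ℤ) - m - 1) / 2 : ℤ) : ℂ))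
          (((a : ℤ) - m + (-j) - 1) / 2 - ((a : ℤ) - m - 1) / 2)) *
      ∑ r ∈ range (N - (-j).toNat + 1),
        C (Cm lam a N m (-j).toNat r) *
          gegenCit (lam + (N : ℂ) - 1 - (r : ℂ))
            ((a : ℤ) - m - 2 * (N : ℤ) + (-j) + 2 * (r : ℤ))
  else 0

/-!
Comparing top coefficients in `S_ℓ^μ f = 0` shows that a nonzero solution has a degree `n` with
`(n - ℓ)(n + ℓ + 2μ) = 0`. For (1), `(A_j^+)` with `f_{j+1} = 0` says `S f_j = 0`, and
`f_j ∈ Pol_{a-m+j}[t]_even` has degree `n ≤ a-m+j < a+m-j = ℓ` of the parity of `ℓ`; so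
`λ + j - 1 = -(n + ℓ)/2`, which is a point of `M_ℓ^{m-j-1}`.

For (2), `(A_{j-1}^-)` with `f_{-j+1} = 0` makes `f_{-j}` a constant `c`, and `(A_j^-) + 2(B_j^-)`
eliminates `f_{-j-1}`, leaving `(a+m+j)(2λ + a+m-j-2) c = 0`. A nonzero constant lies in
`Pol_{a-m-j}[t]_even` only if `a-m-j` is even and nonnegative, and then the second factor is
`2γ(λ, a+m-j-2)`.
-/

lemma euler_C (c : ℂ) : euler (C c) = 0 := by
  simp [euler]

lemma gegenS_C (μ : ℂ) (ℓ : ℤ) (c : ℂ) : gegenS μ ℓ (C c) = C (ℓ * (ℓ + 2 * μ) * c) := by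
  simp [gegenS]

lemma coeff_euler (f : ℂ[X]) (n : ℕ) : (euler f).coeff n = n * f.coeff n := by
  cases n with
  | zero => simp [euler]
  | succ n => simp [euler, coeff_derivative, coeff_X_mul, mul_comm]

lemma gegenS_eq_euler (μ : ℂ) (ℓ : ℤ) (f : ℂ[X]) :
    gegenS μ ℓ f = -(derivative (derivative f) + euler (euler f) + C (2 * μ) * euler f
      - C ((ℓ : ℂ) * (ℓ + 2 * μ)) * f) := by
  simp only [gegenS, euler, derivative_mul, derivative_X, map_mul, map_ofNat]
  ring

lemma coeff_gegenS (μ : ℂ) (ℓ : ℤ) (f : ℂ[X]) (n : ℕ) :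
    (gegenS μ ℓ f).coeff n = -(((n : ℂ) - ℓ) * (n + ℓ + 2 * μ) * f.coeff n
      + (n + 2) * (n + 1) * f.coeff (n + 2)) := by
  rw [gegenS_eq_euler]
  simp only [coeff_neg, coeff_sub, coeff_add, coeff_C_mul, coeff_euler, coeff_derivative]
  push_cast
  ring

lemma indicial_eq_zero_of_gegenS_eq_zero {μ : ℂ} {ℓ : ℤ} {f : ℂ[X]} (hS : gegenS μ ℓ f = 0)
    (hf : f ≠ 0) : ((f.natDegree : ℂ) - ℓ) * (f.natDegree + ℓ + 2 * μ) = 0 := by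
  have h := coeff_gegenS μ ℓ f f.natDegree
  rw [hS, coeff_zero, coeff_eq_zero_of_natDegree_lt (n := f.natDegree + 2) (by omega),
    mul_zero, add_zero, zero_eq_neg] at h
  exact (mul_eq_zero.mp h).resolve_right (leadingCoeff_ne_zero.mpr hf)

lemma polEven.natDegree_le_and_two_dvd {b : ℤ} {f : ℂ[X]} (h : polEven b f) (hf : f ≠ 0) :
    (f.natDegree : ℤ) ≤ b ∧ 2 ∣ b - f.natDegree :=
  h _ (leadingCoeff_ne_zero.mpr hf)

lemma neg_half_mem_Mset {ℓ k n : ℤ} (hn : 0 ≤ n) (hle : n ≤ ℓ - 2 * k - 2) (hpar : 2 ∣ ℓ - n) :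
    -(((n : ℂ) + ℓ) / 2) ∈ Mset ℓ k := by
  obtain ⟨e, he⟩ : ∃ e, n + ℓ = 2 * e := ⟨(n + ℓ) / 2, by omega⟩
  refine ⟨e - (ℓ + 1) / 2, by omega, by omega, ?_⟩
  have he' : (n : ℂ) + ℓ = 2 * e := by exact_mod_cast he
  push_cast
  linear_combination -he' / 2

lemma two_mul_gam_of_even (μ : ℂ) {ℓ : ℤ} (h : 2 ∣ ℓ) : 2 * gam μ ℓ = 2 * μ + ℓ := by
  obtain ⟨e, rfl⟩ := h
  rw [gam, if_pos (Int.mul_emod_right 2 e), Int.mul_ediv_cancel_left _ two_ne_zero]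
  push_cast
  ring

namespace XiSet

variable {lam : ℂ} {a N : ℕ} {m : ℤ} {f : ℤ → ℂ[X]}

theorem eq_zero_of_succ_eq_zero (hm : (N : ℤ) < m) (hf : f ∈ XiSet lam a N m) {j : ℤ}
    (hj0 : 0 ≤ j) (hjN : j ≤ N - 1) (hM : lam + j - 1 ∉ Mset (a + m - j) (m - j - 1))
    (hsucc : f (j + 1) = 0) : f j = 0 := by
  by_contra hne
  have hS : gegenS (lam + j - 1) (a + m - j) (f j) = 0 := by
    simpa [hsucc] using hf.2.2.1 j hj0 (by omega)
  obtain ⟨hdeg, hpar⟩ :=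
    (hf.2.1 j (by rw [abs_of_nonneg hj0]; omega)).natDegree_le_and_two_dvd hne
  have hroot : lam + j - 1 = -(((((f j).natDegree : ℤ) : ℂ) + ((a + m - j : ℤ) : ℂ)) / 2) := by
    have hind := indicial_eq_zero_of_gegenS_eq_zero hS hne
    have hgap : ((f j).natDegree : ℂ) - ((a + m - j : ℤ) : ℂ) ≠ 0 := by
      exact_mod_cast sub_ne_zero.mpr (by omega : ((f j).natDegree : ℤ) ≠ a + m - j)
    push_cast at hind hgap ⊢
    linear_combination (mul_eq_zero.mp hind).resolve_left hgap / 2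
  exact hM (hroot ▸ neg_half_mem_Mset (k := m - j - 1) (by omega) (by omega) (by omega))

theorem neg_eq_zero_of_neg_add_one_eq_zero (hm : (N : ℤ) < m) (hf : f ∈ XiSet lam a N m)
    {j : ℤ} (hj1 : 1 ≤ j) (hjN : j ≤ N) (hg : gam lam (a + m - j - 2) ≠ 0)
    (hprev : f (-j + 1) = 0) : f (-j) = 0 := by
  have hconst : (f (-j)).natDegree = 0 := by
    have h := hf.2.2.2.1 (j - 1) (by omega) (by omega)
    rw [show -(j - 1) = -j + 1 by ring, show -j + 1 - 1 = -j by ring, hprev] at h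
    simp only [gegenS, derivative_zero, mul_zero, zero_add, sub_zero, neg_zero, mul_eq_zero,
      C_eq_zero, two_ne_zero, false_or, derivative_eq_zero] at h
    exact h.resolve_left (by exact_mod_cast (by omega : (N : ℤ) - (j - 1) ≠ 0))
  set c := (f (-j)).coeff 0
  have hfc : f (-j) = C c := eq_C_of_natDegree_eq_zero hconst
  have hkey : ((a + m + j : ℂ) * (2 * lam + (a + m - j - 2))) * c = 0 := by
    have hA := hf.2.2.2.1 j (by omega) hjN
    have hB := hf.2.2.2.2.2 j hj1 hjN
    rw [hfc, gegenS_C] at hA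
    rw [hfc, hprev, euler_C, derivative_zero, mul_zero, sub_zero] at hB
    apply C_injective
    simp only [map_mul, map_add, map_sub, map_one, map_ofNat, map_natCast, map_intCast,
      map_zero] at hA hB ⊢
    push_cast at hA hB ⊢
    linear_combination hA + 2 * hB
  suffices c = 0 by rw [hfc, this, map_zero]
  by_contra hc
  obtain ⟨-, hpar⟩ :=
    hf.2.1 (-j) (by rw [abs_neg, abs_of_pos (by omega)]; omega) 0 (by simpa [hfc])
  have hgam := two_mul_gam_of_even lam (ℓ := a + m - j - 2) (by omega)
  have hpos : (a + m + j : ℂ) ≠ 0 := by exact_mod_cast (by omega : (a + m + j : ℤ) ≠ 0)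
  push_cast at hgam
  rw [← hgam] at hkey
  exact hc ((mul_eq_zero.mp hkey).resolve_left (mul_ne_zero hpos (mul_ne_zero two_ne_zero hg)))

end XiSet

/-- vanishing propagation for members of `Ξ(λ,a,N,m)` when `m > N`. -/
theorem stmt3 (lam : ℂ) (a N : ℕ) (m : ℤ) (hm : (N : ℤ) < m)
    (f : ℤ → ℂ[X]) (hf : f ∈ XiSet lam a N m) :
    (∀ j : ℤ, 0 ≤ j → j ≤ (N : ℤ) - 1 →
      lam + (j : ℂ) - 1 ∉ Mset ((a : ℤ) + m - j) (m - j - 1) →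
      f (j + 1) = 0 → f j = 0) ∧
    (∀ j : ℤ, 1 ≤ j → j ≤ (N : ℤ) →
      gam lam ((a : ℤ) + m - j - 2) ≠ 0 →
      f (-j + 1) = 0 → f (-j) = 0) :=
  ⟨fun _ hj0 hjN hM ↦ XiSet.eq_zero_of_succ_eq_zero hm hf hj0 hjN hM,
    fun _ hj1 hjN hg ↦ XiSet.neg_eq_zero_of_neg_add_one_eq_zero hm hf hj1 hjN hg⟩
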